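/- For all integers n ≥ 1 and m ≥ 0, the number of finitely supported sequences (a_1, a_2, a_3, …) of nonnegative integers satisfying Σ_{i≥1} a_i = n and Σ_{i≥1} a_i 2^i = m is at most e^{2πn/√3} · 2^n. Equivalently, the number of partitions of m into exactly n parts, each of which is a power of 2 greater than 1, is at most e^{2πn/√3} · 2^n. -/

import Mathlib

/-!
Sort the parts as `2^e₁ ≤ ⋯ ≤ 2^eₙ` and let `Sᵢ = 2^eᵢ + ⋯ + 2^eₙ`, so `S₁ = m`. Since `2^eᵢ ∣ Sᵢ`,
the numbers `cᵢ = v₂(Sᵢ) - eᵢ` are natural, and removing the part `2^eᵢ` from `Sᵢ` changes the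
binary digit sum by `1 - cᵢ` (Legendre's formula). Hence `∑ cᵢ = n - s₂(m) < n`. The partition is
recovered from `m` and `(cᵢ)`, because `e₁ = v₂(m) - c₁`. Writing `(cᵢ)` in unary shows there are
at most `4^n` such codes, and `2 ≤ e^{2π/√3}`.
-/

open Nat

theorem Nat.digits_sum_base_pow_mul {b : ℕ} (hb : 1 < b) (k m : ℕ) :
    (Nat.digits b (b ^ k * m)).sum = (Nat.digits b m).sum := by
  rcases Nat.eq_zero_or_pos m with rfl | hm
  · simp
  · simp [Nat.digits_base_pow_mul hb hm]

theorem digits_two_sum_pos {S : ℕ} (hS : S ≠ 0) : 0 < (Nat.digits 2 S).sum := by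
  have h := sub_one_mul_padicValNat_factorial_lt_of_ne_zero 2 hS
  rw [sub_one_mul_padicValNat_factorial] at h
  omega

theorem digits_two_sum_pred_add_one {M : ℕ} (hM : M ≠ 0) :
    (Nat.digits 2 (M - 1)).sum + 1 = (Nat.digits 2 M).sum + padicValNat 2 M := by
  have hfac : padicValNat 2 M ! = padicValNat 2 M + padicValNat 2 (M - 1)! := by
    rw [← Nat.mul_factorial_pred hM, padicValNat.mul hM (Nat.factorial_ne_zero _)]
  have hlegendre := sub_one_mul_padicValNat_factorial (p := 2) M
  have hlegendre_pred := sub_one_mul_padicValNat_factorial (p := 2) (M - 1)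
  have := Nat.digit_sum_le 2 M
  have := Nat.digit_sum_le 2 (M - 1)
  omega

theorem digits_two_sum_sub_two_pow {S e : ℕ} (hd : 2 ^ e ∣ S) (hS : S ≠ 0) :
    (Nat.digits 2 (S - 2 ^ e)).sum + 1 + e = (Nat.digits 2 S).sum + padicValNat 2 S := by
  obtain ⟨M, rfl⟩ := hd
  have hM : M ≠ 0 := right_ne_zero_of_mul hS
  rw [← Nat.mul_sub_one, Nat.digits_sum_base_pow_mul one_lt_two,
    Nat.digits_sum_base_pow_mul one_lt_two, padicValNat.mul (by positivity) hM,
    padicValNat.prime_pow, digits_two_sum_pred_add_one hM]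
  ring

def powSum (l : List ℕ) : ℕ := (l.map (2 ^ ·)).sum

theorem powSum_cons (e : ℕ) (t : List ℕ) : powSum (e :: t) = 2 ^ e + powSum t := rfl

theorem two_pow_dvd_powSum {e : ℕ} {l : List ℕ} (h : ∀ x ∈ l, e ≤ x) : 2 ^ e ∣ powSum l :=
  List.dvd_sum <| by simpa using fun x hx => pow_dvd_pow 2 (h x hx)

theorem two_pow_dvd_powSum_cons {e : ℕ} {t : List ℕ} (h : (e :: t).Pairwise (· ≤ ·)) :
    2 ^ e ∣ powSum (e :: t) :=
  two_pow_dvd_powSum <| List.forall_mem_cons.mpr ⟨le_rfl, (List.pairwise_cons.mp h).1⟩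

theorem le_padicValNat_powSum_cons {e : ℕ} {t : List ℕ} (h : (e :: t).Pairwise (· ≤ ·)) :
    e ≤ padicValNat 2 (powSum (e :: t)) :=
  (padicValNat_dvd_iff_le (by simp [powSum_cons])).mp (two_pow_dvd_powSum_cons h)

def carryCode : List ℕ → List ℕ
  | [] => []
  | e :: t => (padicValNat 2 (powSum (e :: t)) - e) :: carryCode t

theorem length_carryCode (l : List ℕ) : (carryCode l).length = l.length := by
  induction l with
  | nil => rfl
  | cons e t ih => simp [carryCode, ih]

theorem carryCode_sum_add_digits_sum {l : List ℕ} (hl : l.Pairwise (· ≤ ·)) :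
    (carryCode l).sum + (Nat.digits 2 (powSum l)).sum = l.length := by
  induction l with
  | nil => simp [carryCode, powSum]
  | cons e t ih =>
    have hle := le_padicValNat_powSum_cons hl
    have hkey := digits_two_sum_sub_two_pow (two_pow_dvd_powSum_cons hl)
      (by simp [powSum_cons] : powSum (e :: t) ≠ 0)
    have ih := ih (List.pairwise_cons.mp hl).2
    rw [powSum_cons, Nat.add_sub_cancel_left, ← powSum_cons] at hkey
    simp only [carryCode, List.sum_cons, List.length_cons]
    omega

theorem carryCode_sum_lt_length {l : List ℕ} (hl : l.Pairwise (· ≤ ·)) (hlen : 0 < l.length) :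
    (carryCode l).sum < l.length := by
  have hS : powSum l ≠ 0 := by
    obtain ⟨e, t, rfl⟩ := List.exists_cons_of_length_pos hlen
    simp [powSum_cons]
  have := digits_two_sum_pos hS
  have := carryCode_sum_add_digits_sum hl
  omega

theorem carryCode_injOn {l l' : List ℕ} (hl : l.Pairwise (· ≤ ·)) (hl' : l'.Pairwise (· ≤ ·))
    (hsum : powSum l = powSum l') (hcode : carryCode l = carryCode l') : l = l' := by
  induction l generalizing l' with
  | nil => cases l' <;> simp_all [carryCode]
  | cons e t ih =>
    cases l' with
    | nil => simp [carryCode] at hcode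
    | cons e' t' =>
      simp only [carryCode, List.cons.injEq] at hcode
      have he := le_padicValNat_powSum_cons hl
      have he' := le_padicValNat_powSum_cons hl'
      rw [← hsum] at he' hcode
      obtain rfl : e = e' := by omega
      rw [powSum_cons, powSum_cons, Nat.add_left_cancel_iff] at hsum
      rw [ih (List.pairwise_cons.mp hl).2 (List.pairwise_cons.mp hl').2 hsum hcode.2]

def unaryEncode : List ℕ → List Bool
  | [] => []
  | x :: t => List.replicate x true ++ false :: unaryEncode t

theorem length_unaryEncode (l : List ℕ) : (unaryEncode l).length = l.sum + l.length := by
  induction l with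
  | nil => rfl
  | cons x t ih =>
    simp only [unaryEncode, List.length_append, List.length_replicate, List.length_cons, ih,
      List.sum_cons]
    omega

theorem unaryEncode_injective : Function.Injective unaryEncode := by
  intro l l' h
  induction l generalizing l' with
  | nil => cases l' <;> simp_all [unaryEncode]
  | cons x t ih =>
    cases l' with
    | nil => simp [unaryEncode] at h
    | cons y t' =>
      obtain rfl : x = y := by
        simpa [unaryEncode, List.idxOf_append] using congrArg (List.idxOf false) h
      simp only [unaryEncode, List.append_cancel_left_eq, List.cons.injEq, true_and] at h
      rw [ih h]

theorem card_le_two_pow_of_injective {α : Type*} {k s : ℕ} (f : α → List ℕ)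
    (hf : Function.Injective f) (hlen : ∀ a, (f a).length = k) (hsum : ∀ a, (f a).sum < s) :
    Nat.card α ≤ 2 ^ (k + s) := by
  -- the slack entry `s - 1 - ∑ f a` pads every encoding to length exactly `k + s`
  let g : α → List.Vector Bool (k + s) := fun a =>
    ⟨unaryEncode (f a ++ [s - 1 - (f a).sum]), by
      have := hsum a
      simp only [length_unaryEncode, List.sum_append, List.sum_singleton, List.length_append,
        hlen, List.length_singleton]
      omega⟩
  have hg : Function.Injective g := fun a b hab => by
    have h := unaryEncode_injective (congrArg Subtype.val hab)
    exact hf (List.append_inj h (by rw [hlen, hlen])).1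
  simpa [Nat.card_eq_fintype_card, card_vector] using Nat.card_le_card_of_injective g hg

noncomputable def sortedParts (a : ℕ →₀ ℕ) : List ℕ := a.toMultiset.sort (· ≤ ·)

theorem pairwise_sortedParts (a : ℕ →₀ ℕ) : (sortedParts a).Pairwise (· ≤ ·) :=
  Multiset.pairwise_sort _ _

theorem sortedParts_injective : Function.Injective sortedParts := fun a b h =>
  (Function.LeftInverse.injective Finsupp.toMultiset_toFinsupp) <| by
    rw [← Multiset.sort_eq a.toMultiset (· ≤ ·), ← Multiset.sort_eq b.toMultiset (· ≤ ·)]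
    exact congrArg _ h

theorem length_sortedParts (a : ℕ →₀ ℕ) :
    (sortedParts a).length = a.sum fun _ x => x := by
  rw [← Multiset.coe_card, sortedParts, Multiset.sort_eq, Finsupp.card_toMultiset]
  rfl

theorem powSum_sortedParts (a : ℕ →₀ ℕ) :
    powSum (sortedParts a) = a.sum fun i x => x * 2 ^ i := by
  calc powSum (sortedParts a)
      = ((sortedParts a : Multiset ℕ).map (2 ^ ·)).sum := by
        rw [Multiset.map_coe, Multiset.sum_coe, powSum]
    _ = (a.toMultiset.map (2 ^ ·)).sum := by rw [sortedParts, Multiset.sort_eq]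
    _ = a.sum fun i x => x * 2 ^ i := by
      rw [Finsupp.toMultiset_map, Finsupp.sum_toMultiset,
        Finsupp.sum_mapDomain_index (by simp) (fun _ _ _ => add_smul _ _ _)]
      simp

theorem two_pow_le_exp_two_pi_mul_div_sqrt_three (n : ℕ) :
    (2 : ℝ) ^ n ≤ Real.exp (2 * Real.pi * n / Real.sqrt 3) := by
  have hsqrt : Real.sqrt 3 < 2 := by
    rw [Real.sqrt_lt' two_pos]; norm_num
  have hone : 1 ≤ 2 * Real.pi / Real.sqrt 3 := by
    rw [le_div_iff₀ (by positivity)]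
    linarith [Real.pi_gt_three]
  calc (2 : ℝ) ^ n ≤ Real.exp (2 * Real.pi / Real.sqrt 3) ^ n := by
        gcongr
        linarith [Real.add_one_le_exp (2 * Real.pi / Real.sqrt 3)]
    _ = Real.exp (2 * Real.pi * n / Real.sqrt 3) := by
        rw [← Real.exp_nat_mul]
        ring_nf

/-- for `n ≥ 1` and `m ≥ 0`, the number of finitely supported sequences
`(a_1, a_2, …)` of nonnegative integers with `Σ a_i = n` and `Σ a_i 2^i = m` (equivalently,
the number of partitions of `m` into exactly `n` parts, each a power of `2` greater
than `1`) is at most `e^{2πn/√3} · 2^n`. -/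
theorem stmt17 (n : ℕ) (hn : 1 ≤ n) (m : ℕ) :
    (Nat.card {a : ℕ →₀ ℕ // a 0 = 0 ∧ (a.sum fun _ x => x) = n ∧
        (a.sum fun i x => x * 2 ^ i) = m} : ℝ) ≤
      Real.exp (2 * Real.pi * n / Real.sqrt 3) * 2 ^ n := by
  calc _ ≤ ((2 ^ (n + n) : ℕ) : ℝ) := by
        refine Nat.cast_le.mpr <| card_le_two_pow_of_injective
          (fun a => carryCode (sortedParts a.1)) (fun a b h => ?_) (fun a => ?_) (fun a => ?_)
        · refine Subtype.ext <| sortedParts_injective <|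
            carryCode_injOn (pairwise_sortedParts _) (pairwise_sortedParts _) ?_ h
          rw [powSum_sortedParts, powSum_sortedParts, a.2.2.2, b.2.2.2]
        · rw [length_carryCode, length_sortedParts, a.2.2.1]
        · have hlen : (sortedParts a.1).length = n := by rw [length_sortedParts, a.2.2.1]
          simpa [hlen] using carryCode_sum_lt_length (pairwise_sortedParts a.1) (by omega)
    _ = 2 ^ n * 2 ^ n := by push_cast; exact pow_add _ _ _
    _ ≤ _ := by gcongr; exact two_pow_le_exp_two_pi_mul_div_sqrt_three n
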